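/- (Inversion of the bias-aware decomposition.) Under symmetric label noise with error rate e satisfying 0 ≤ e < (K−1)/K (so a = (1−e) − e/(K−1) ≠ 0) and positive class masses, for every measurable LLM labeler ŷ : Ω → Fin K the true agreement is recovered from observables as A_T(ŷ) = (A_R(ŷ) − b − J(ŷ)) / a, where b = e/(K−1). -/

import Mathlib

open MeasureTheory

/-- True agreement `A_T(ŷ) = μ({ŷ = y})`. -/
noncomputable def trueAgree {Ω : Type*} [MeasurableSpace Ω] {K : ℕ}
    (μ : Measure Ω) (y yhat : Ω → Fin K) : ℝ :=
  (μ {ω | yhat ω = y ω}).toReal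

/-- Reference agreement `A_R(ŷ) = μ({ŷ = r})`. -/
noncomputable def refAgree {Ω : Type*} [MeasurableSpace Ω] {K : ℕ}
    (μ : Measure Ω) (r yhat : Ω → Fin K) : ℝ :=
  (μ {ω | yhat ω = r ω}).toReal

/-- Measurement error `ε(ŷ) = 1 − A_T(ŷ)`. -/
noncomputable def measError {Ω : Type*} [MeasurableSpace Ω] {K : ℕ}
    (μ : Measure Ω) (y yhat : Ω → Fin K) : ℝ :=
  1 - trueAgree μ y yhat

/-- Co-labeling covariance
`J(ŷ) = ∑ₖ ∑ₗ [ μ({ŷ=ℓ}∩{r=ℓ}∩{y=k}) − μ({ŷ=ℓ}∩{y=k})·μ({r=ℓ}∩{y=k}) / μ({y=k}) ]`. -/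
noncomputable def coLabelCov {Ω : Type*} [MeasurableSpace Ω] {K : ℕ}
    (μ : Measure Ω) (y r yhat : Ω → Fin K) : ℝ :=
  ∑ k : Fin K, ∑ l : Fin K,
    ((μ ({ω | yhat ω = l} ∩ {ω | r ω = l} ∩ {ω | y ω = k})).toReal
      - (μ ({ω | yhat ω = l} ∩ {ω | y ω = k})).toReal
          * (μ ({ω | r ω = l} ∩ {ω | y ω = k})).toReal
          / (μ {ω | y ω = k}).toReal)

/-! Within each true class `k`, symmetric noise makes `r = ℓ` occur with conditional probability
`b + a·[ℓ = k]`, so the product (conditionally independent) part of the reference agreement in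
class `k` is `b·μ(y = k) + a·μ(ŷ = k, y = k)`. Summing over `k` gives `A_R − J = b + a·A_T`,
which is solved for `A_T` since `a > 0`. -/

open Finset

theorem measureReal_eq_sum_inter_fiber {α β : Type*} [MeasurableSpace α] [MeasurableSpace β]
    [MeasurableSingletonClass β] [Fintype β] (μ : Measure α) [IsFiniteMeasure μ]
    {f : α → β} (hf : Measurable f) (s : Set α) :
    μ.real s = ∑ b, μ.real ({x | f x = b} ∩ s) := by
  have hfib : ∀ b, MeasurableSet {x | f x = b} := fun b ↦ hf (measurableSet_singleton b)
  calc μ.real s = (μ.restrict s).real (f ⁻¹' ↑(univ : Finset β)) := by simp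
    _ = ∑ b, (μ.restrict s).real (f ⁻¹' {b}) :=
        (sum_measureReal_preimage_singleton univ fun b _ ↦ hfib b).symm
    _ = ∑ b, μ.real ({x | f x = b} ∩ s) :=
        sum_congr rfl fun b _ ↦ measureReal_restrict_apply (hfib b)

theorem sum_measureReal_fiber_eq_one {α β : Type*} [MeasurableSpace α] [MeasurableSpace β]
    [MeasurableSingletonClass β] [Fintype β] (μ : Measure α) [IsProbabilityMeasure μ]
    {f : α → β} (hf : Measurable f) :
    ∑ b, μ.real {x | f x = b} = 1 := by
  simpa using (measureReal_eq_sum_inter_fiber μ hf Set.univ).symm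

theorem mul_mul_div_cancel_of_le {α : Type*} [Field α] [LinearOrder α] [IsStrictOrderedRing α]
    {p q : α} (c : α) (hq : 0 ≤ q) (hqp : q ≤ p) :
    q * (c * p) / p = c * q := by
  obtain rfl | hp := eq_or_ne p 0
  · simp [le_antisymm hqp hq]
  · field_simp

section Agreement

variable {Ω : Type*} [MeasurableSpace Ω] {K : ℕ} (μ : Measure Ω) {y r yhat : Ω → Fin K}

theorem trueAgree_eq_sum [IsFiniteMeasure μ] (hy : Measurable y) :
    trueAgree μ y yhat = ∑ k, μ.real ({ω | yhat ω = k} ∩ {ω | y ω = k}) := by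
  rw [trueAgree, ← measureReal_def, measureReal_eq_sum_inter_fiber μ hy]
  congr! 2 with k
  ext ω
  simp only [Set.mem_inter_iff, Set.mem_ofPred_eq]
  grind

theorem refAgree_eq_sum [IsFiniteMeasure μ] (hy : Measurable y) (hyhat : Measurable yhat) :
    refAgree μ r yhat
      = ∑ k, ∑ l, μ.real ({ω | yhat ω = l} ∩ {ω | r ω = l} ∩ {ω | y ω = k}) := by
  rw [refAgree, ← measureReal_def, measureReal_eq_sum_inter_fiber μ hy]
  congr! 1 with k
  rw [measureReal_eq_sum_inter_fiber μ hyhat]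
  congr! 2 with l
  ext ω
  simp only [Set.mem_inter_iff, Set.mem_ofPred_eq]
  grind

theorem coLabelCov_eq_of_uniform_confusion [IsProbabilityMeasure μ] (hy : Measurable y)
    (hyhat : Measurable yhat) (a b : ℝ) (hconf : ∀ k l, μ.real ({ω | r ω = l} ∩ {ω | y ω = k})
      = (b + if l = k then a else 0) * μ.real {ω | y ω = k}) :
    coLabelCov μ y r yhat = refAgree μ r yhat - b - a * trueAgree μ y yhat := by
  -- `μ(ŷ = ℓ, y = k) ≤ μ(y = k)` keeps this right when the class `k` is null (where `/ 0 = 0`).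
  have hterm : ∀ k l, μ.real ({ω | yhat ω = l} ∩ {ω | y ω = k})
      * μ.real ({ω | r ω = l} ∩ {ω | y ω = k}) / μ.real {ω | y ω = k}
      = (b + if l = k then a else 0) * μ.real ({ω | yhat ω = l} ∩ {ω | y ω = k}) := by
    intro k l
    rw [hconf]
    exact mul_mul_div_cancel_of_le _ measureReal_nonneg (measureReal_mono Set.inter_subset_right)
  have hclass : ∀ k, ∑ l, μ.real ({ω | yhat ω = l} ∩ {ω | y ω = k})
      * μ.real ({ω | r ω = l} ∩ {ω | y ω = k}) / μ.real {ω | y ω = k}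
      = b * μ.real {ω | y ω = k} + a * μ.real ({ω | yhat ω = k} ∩ {ω | y ω = k}) := by
    intro k
    simp only [hterm, add_mul, sum_add_distrib, ite_mul, zero_mul, sum_ite_eq', mem_univ, if_true,
      ← mul_sum, ← measureReal_eq_sum_inter_fiber μ hyhat]
  simp only [coLabelCov, ← measureReal_def, sum_sub_distrib, hclass, sum_add_distrib, ← mul_sum,
    sum_measureReal_fiber_eq_one μ hy, refAgree_eq_sum μ hy hyhat, trueAgree_eq_sum μ hy]
  ring

end Agreement

theorem trueAgree_eq_of_decomposition_general
    {Ω : Type*} [MeasurableSpace Ω] {K : ℕ} (hK : 2 ≤ K)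
    (e : ℝ) (he1 : e < ((K : ℝ) - 1) / K)
    (μ : Measure Ω) [IsProbabilityMeasure μ]
    (y r : Ω → Fin K) (hy : Measurable y)
    (hnoise_diag : ∀ k : Fin K,
      (μ ({ω | r ω = k} ∩ {ω | y ω = k})).toReal
        = (1 - e) * (μ {ω | y ω = k}).toReal)
    (hnoise_off : ∀ k l : Fin K, l ≠ k →
      (μ ({ω | r ω = l} ∩ {ω | y ω = k})).toReal
        = e / ((K : ℝ) - 1) * (μ {ω | y ω = k}).toReal)
    (yhat : Ω → Fin K) (hyhat : Measurable yhat) :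
    trueAgree μ y yhat
      = (refAgree μ r yhat - e / ((K : ℝ) - 1) - coLabelCov μ y r yhat)
          / ((1 - e) - e / ((K : ℝ) - 1)) := by
  have hK1 : (0 : ℝ) < K - 1 := by
    have : (2 : ℝ) ≤ K := by exact_mod_cast hK
    linarith
  have ha : 0 < (1 - e) - e / ((K : ℝ) - 1) := by
    rw [lt_div_iff₀ (by linarith)] at he1
    rw [sub_pos, div_lt_iff₀ hK1]
    linarith
  have hconf : ∀ k l, μ.real ({ω | r ω = l} ∩ {ω | y ω = k})
      = (e / ((K : ℝ) - 1) + if l = k then (1 - e) - e / ((K : ℝ) - 1) else 0)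
        * μ.real {ω | y ω = k} := by
    intro k l
    simp only [measureReal_def]
    split_ifs with hlk
    · subst hlk
      rw [hnoise_diag]
      ring
    · rw [hnoise_off k l hlk]
      ring
  rw [eq_div_iff ha.ne', coLabelCov_eq_of_uniform_confusion μ hy hyhat _ _ hconf]
  ring

/-- **inversion of the bias-aware decomposition.** Under symmetric
label noise with `0 ≤ e < (K−1)/K` (so `a = (1−e) − e/(K−1) ≠ 0`) and positive
class masses, for every measurable labeler `ŷ`,
`A_T(ŷ) = (A_R(ŷ) − b − J(ŷ)) / a` with `b = e/(K−1)`. -/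
theorem trueAgree_eq_of_decomposition
    {Ω : Type*} [MeasurableSpace Ω] {K : ℕ} (hK : 2 ≤ K)
    (e : ℝ) (he0 : 0 ≤ e) (he1 : e < ((K : ℝ) - 1) / K)
    (μ : Measure Ω) [IsProbabilityMeasure μ]
    (y r : Ω → Fin K) (hy : Measurable y) (hr : Measurable r)
    (hnoise_diag : ∀ k : Fin K,
      (μ ({ω | r ω = k} ∩ {ω | y ω = k})).toReal
        = (1 - e) * (μ {ω | y ω = k}).toReal)
    (hnoise_off : ∀ k l : Fin K, l ≠ k →
      (μ ({ω | r ω = l} ∩ {ω | y ω = k})).toReal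
        = e / ((K : ℝ) - 1) * (μ {ω | y ω = k}).toReal)
    (hpos : ∀ k : Fin K, 0 < μ {ω | y ω = k})
    (yhat : Ω → Fin K) (hyhat : Measurable yhat) :
    trueAgree μ y yhat
      = (refAgree μ r yhat - e / ((K : ℝ) - 1) - coLabelCov μ y r yhat)
          / ((1 - e) - e / ((K : ℝ) - 1)) :=
  trueAgree_eq_of_decomposition_general hK e he1 μ y r hy hnoise_diag hnoise_off yhat hyhat
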